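/- arXiv:2604.08580 — 2 statements merged into one kernel-verified Lean document; each statement's English description precedes it below -/
import Mathlib

section
/- Pathwise lean adjoint gradient identity: Let d be a positive integer and T > 0. Let b : ℝ^d × ℝ → ℝ^d and f : ℝ^d × ℝ → ℝ be continuously differentiable in their first (space) argument, let g : ℝ^d → ℝ be continuously differentiable, and let x : ℝ → ℝ^d be a continuous path such that t ↦ ∇_x b(x(t), t) and t ↦ ∇_x f(x(t), t) are continuous on [0,T]. Suppose ξ : ℝ → ℝ^d satisfies the tangent equation ξ'(t) = ∇_x b(x(t), t) · ξ(t) for all t ∈ [0,T] with ξ(0) = v, and a : ℝ → ℝ^d satisfies the lean adjoint equation a'(t) = −∇_x b(x(t), t)ᵀ · a(t) − ∇_x f(x(t), t) for all t ∈ [0,T] with terminal condition a(T) = ∇g(x(T)). Then ⟨a(0), v⟩ = ∫_0^T ⟨∇_x f(x(t), t), ξ(t)⟩ dt + ⟨∇g(x(T)), ξ(T)⟩. -/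
/-!
Along the path, the pairing `⟪a t, ξ t⟫` of the lean adjoint with the tangent process has
derivative `-⟪∇ₓf(x t, t), ξ t⟫`: the Jacobian terms cancel because `∇ₓbᵀ` is the adjoint of
`∇ₓb` for the Euclidean inner product. Integrating over `[0, T]` and inserting the boundary
values `ξ 0 = v`, `a T = ∇g(x T)` gives the identity.
-/

open scoped RealInnerProductSpace
open Set Matrix intervalIntegral

/-- Action of a real `d × d` matrix on a vector of `EuclideanSpace ℝ (Fin d)`
by matrix–vector multiplication. -/
def matVec {d : ℕ} (M : Matrix (Fin d) (Fin d) ℝ) (v : EuclideanSpace ℝ (Fin d)) :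
    EuclideanSpace ℝ (Fin d) := WithLp.toLp 2 (M.mulVec v)

/-- The Jacobian matrix at `x` of a map `φ : ℝ^d → ℝ^d`. -/
noncomputable def jacobianMatrix {d : ℕ}
    (φ : EuclideanSpace ℝ (Fin d) → EuclideanSpace ℝ (Fin d))
    (x : EuclideanSpace ℝ (Fin d)) : Matrix (Fin d) (Fin d) ℝ :=
  Matrix.toEuclideanLin.symm (fderiv ℝ φ x).toLinearMap

lemma inner_matVec_transpose {d : ℕ} (M : Matrix (Fin d) (Fin d) ℝ)
    (u w : EuclideanSpace ℝ (Fin d)) :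
    ⟪matVec Mᵀ u, w⟫ = ⟪u, matVec M w⟫ := by
  simp only [matVec, EuclideanSpace.inner_eq_star_dotProduct, star_trivial, mulVec_transpose]
  rw [dotProduct_comm (M *ᵥ _), dotProduct_mulVec, dotProduct_comm]

section AdjointPairing

variable {E : Type*} [NormedAddCommGroup E] [InnerProductSpace ℝ E]
  {A A' : ℝ → E → E} {ξ a h : ℝ → E} {t T : ℝ}

lemma hasDerivAt_inner_of_adjoint (hadj : ∀ u w, ⟪A' t u, w⟫ = ⟪u, A t w⟫)
    (hξ : HasDerivAt ξ (A t (ξ t)) t) (ha : HasDerivAt a (-A' t (a t) - h t) t) :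
    HasDerivAt (fun s => ⟪a s, ξ s⟫) (-⟪h t, ξ t⟫) t := by
  refine (ha.inner ℝ hξ).congr_deriv ?_
  rw [inner_sub_left, inner_neg_left, hadj]
  ring

theorem inner_eq_integral_add_inner_of_adjoint (hT : 0 ≤ T)
    (hadj : ∀ t ∈ Icc 0 T, ∀ u w, ⟪A' t u, w⟫ = ⟪u, A t w⟫)
    (hξ : ∀ t ∈ Icc 0 T, HasDerivAt ξ (A t (ξ t)) t)
    (ha : ∀ t ∈ Icc 0 T, HasDerivAt a (-A' t (a t) - h t) t)
    (hh : ContinuousOn h (Icc 0 T)) :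
    ⟪a 0, ξ 0⟫ = (∫ t in (0 : ℝ)..T, ⟪h t, ξ t⟫) + ⟪a T, ξ T⟫ := by
  have hξc : ContinuousOn ξ (Icc 0 T) := fun t ht => (hξ t ht).continuousAt.continuousWithinAt
  have hint : IntervalIntegrable (fun t => ⟪h t, ξ t⟫) MeasureTheory.volume 0 T :=
    (hh.inner hξc).intervalIntegrable_of_Icc hT
  have hFTC := integral_eq_sub_of_hasDerivAt (f := fun s => ⟪a s, ξ s⟫)
    (fun t ht => hasDerivAt_inner_of_adjoint (hadj t (uIcc_of_le hT ▸ ht))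
      (hξ t (uIcc_of_le hT ▸ ht)) (ha t (uIcc_of_le hT ▸ ht))) hint.neg
  rw [integral_neg] at hFTC
  linarith

end AdjointPairing

theorem lean_adjoint_pathwise_gradient_identity_general
    (d : ℕ) (T : ℝ) (hT : 0 < T)
    (b : EuclideanSpace ℝ (Fin d) → ℝ → EuclideanSpace ℝ (Fin d))
    (f : EuclideanSpace ℝ (Fin d) → ℝ → ℝ)
    (g : EuclideanSpace ℝ (Fin d) → ℝ)
    (x : ℝ → EuclideanSpace ℝ (Fin d))
    (v : EuclideanSpace ℝ (Fin d))
    (ξ a : ℝ → EuclideanSpace ℝ (Fin d))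
    (hgfCont : ContinuousOn
      (fun t => gradient (fun y => f y t) (x t)) (Icc 0 T))
    (hξ : ∀ t ∈ Icc (0 : ℝ) T,
      HasDerivAt ξ (matVec (jacobianMatrix (fun y => b y t) (x t)) (ξ t)) t)
    (hξ0 : ξ 0 = v)
    (ha : ∀ t ∈ Icc (0 : ℝ) T,
      HasDerivAt a (-matVec (jacobianMatrix (fun y => b y t) (x t))ᵀ (a t)
        - gradient (fun y => f y t) (x t)) t)
    (haT : a T = gradient g (x T)) :
    ⟪a 0, v⟫ = (∫ t in (0 : ℝ)..T, ⟪gradient (fun y => f y t) (x t), ξ t⟫)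
      + ⟪gradient g (x T), ξ T⟫ := by
  rw [← hξ0, ← haT]
  exact inner_eq_integral_add_inner_of_adjoint hT.le
    (fun t _ => inner_matVec_transpose _) hξ ha hgfCont

/-- **Pathwise lean adjoint gradient identity.**

If `ξ` solves the tangent equation `ξ' = ∇ₓb(x(t),t) ξ` with `ξ 0 = v` and `a` solves the
lean adjoint equation `a' = -∇ₓb(x(t),t)ᵀ a - ∇ₓf(x(t),t)` with `a T = ∇g(x(T))`, then
`⟪a 0, v⟫ = ∫_0^T ⟪∇ₓf(x(t),t), ξ t⟫ dt + ⟪∇g(x(T)), ξ T⟫`. -/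
theorem lean_adjoint_pathwise_gradient_identity
    (d : ℕ) (hd : 0 < d) (T : ℝ) (hT : 0 < T)
    (b : EuclideanSpace ℝ (Fin d) → ℝ → EuclideanSpace ℝ (Fin d))
    (f : EuclideanSpace ℝ (Fin d) → ℝ → ℝ)
    (g : EuclideanSpace ℝ (Fin d) → ℝ)
    (x : ℝ → EuclideanSpace ℝ (Fin d))
    (v : EuclideanSpace ℝ (Fin d))
    (ξ a : ℝ → EuclideanSpace ℝ (Fin d))
    (hb : ∀ t : ℝ, ContDiff ℝ 1 (fun y => b y t))
    (hf : ∀ t : ℝ, ContDiff ℝ 1 (fun y => f y t))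
    (hg : ContDiff ℝ 1 g)
    (hx : ContinuousOn x (Icc 0 T))
    (hJbCont : ∀ i j, ContinuousOn
      (fun t => jacobianMatrix (fun y => b y t) (x t) i j) (Icc 0 T))
    (hgfCont : ContinuousOn
      (fun t => gradient (fun y => f y t) (x t)) (Icc 0 T))
    (hξ : ∀ t ∈ Icc (0 : ℝ) T,
      HasDerivAt ξ (matVec (jacobianMatrix (fun y => b y t) (x t)) (ξ t)) t)
    (hξ0 : ξ 0 = v)
    (ha : ∀ t ∈ Icc (0 : ℝ) T,
      HasDerivAt a (-matVec (jacobianMatrix (fun y => b y t) (x t))ᵀ (a t)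
        - gradient (fun y => f y t) (x t)) t)
    (haT : a T = gradient g (x T)) :
    ⟪a 0, v⟫ = (∫ t in (0 : ℝ)..T, ⟪gradient (fun y => f y t) (x t), ξ t⟫)
      + ⟪gradient g (x T), ξ T⟫ :=
  lean_adjoint_pathwise_gradient_identity_general d T hT b f g x v ξ a hgfCont hξ hξ0 ha haT
end

section
/- Pathwise second-order Hessian-bilinear adjoint identity (deterministic/pathwise core of the second-order adjoint lemma with purely time-dependent diffusion): Let d be a positive integer, T > 0, and v, w ∈ ℝ^d. Let b : ℝ^d × ℝ → ℝ^d and f : ℝ^d × ℝ → ℝ be twice continuously differentiable in the space variable, g : ℝ^d → ℝ twice continuously differentiable, and x : ℝ → ℝ^d a continuous path such that all the composed coefficient maps below are continuous on [0,T]. Suppose that on [0,T]: (i) ξᵛ'(t) = ∇_x b(x(t),t) · ξᵛ(t) with ξᵛ(0) = v, and ξʷ'(t) = ∇_x b(x(t),t) · ξʷ(t) with ξʷ(0) = w; (ii) ζ'(t) = ∇_x b(x(t),t) · ζ(t) + ∇²_x b(x(t),t)[ξᵛ(t), ξʷ(t)] with ζ(0) = 0; (iii) a'(t) = −∇_x b(x(t),t)ᵀ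 · a(t) − ∇_x f(x(t),t) with a(T) = ∇g(x(T)); (iv) A'(t) = −( ∇_x b(x(t),t)ᵀ · A(t) + A(t) · ∇_x b(x(t),t) + ∇²_x f(x(t),t) + Σ_{i=1}^d a_i(t) · ∇²_x b_i(x(t),t) ) with A(T) = ∇²g(x(T)). Then ∫_0^T ( ⟨∇²_x f(x(t),t) · ξᵛ(t), ξʷ(t)⟩ + ⟨∇_x f(x(t),t), ζ(t)⟩ ) dt + ⟨∇²g(x(T)) · ξᵛ(T), ξʷ(T)⟩ + ⟨∇g(x(T)), ζ(T)⟩ = ⟨v, A(0) · w⟩. -/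
open scoped RealInnerProductSpace
open Set Matrix intervalIntegral

attribute [local instance] Matrix.normedAddCommGroup Matrix.normedSpace

/-- Reinterpret a plain vector `Fin d → ℝ` as an element of `EuclideanSpace ℝ (Fin d)`. -/
def toEuc {d : ℕ} (v : Fin d → ℝ) : EuclideanSpace ℝ (Fin d) := WithLp.toLp 2 v

/-- The Hessian matrix at `x` of a scalar map `φ : ℝ^d → ℝ` (the Jacobian of its
gradient). -/
noncomputable def hessianMatrix {d : ℕ}
    (φ : EuclideanSpace ℝ (Fin d) → ℝ)
    (x : EuclideanSpace ℝ (Fin d)) : Matrix (Fin d) (Fin d) ℝ :=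
  Matrix.toEuclideanLin.symm (fderiv ℝ (gradient φ) x).toLinearMap

/-!
Along the path, the pairing `Φ t = ⟪ξv t, A t ξw t⟫ + ⟪a t, ζ t⟫` satisfies
`Φ' = -(⟪ξv, ∇²ₓf ξw⟫ + ⟪∇ₓf, ζ⟫)`: the Jacobian terms of the four equations cancel in pairs
after transposition, and the source `∇²ₓb[ξv, ξw]` of the second tangent equation, paired with
`a`, cancels the term `∑ aᵢ ∇²ₓbᵢ` of the second-order adjoint equation. Integrating over `[0, T]`
gives the identity, once the terminal conditions are inserted using the symmetry of the Hessians
of `f` and `g`.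
-/

section Hessian

variable {F : Type*} [NormedAddCommGroup F] [InnerProductSpace ℝ F] [CompleteSpace F]

theorem inner_fderiv_gradient_apply (φ : F → ℝ) (x u v : F) :
    ⟪fderiv ℝ (gradient φ) x u, v⟫ = fderiv ℝ (fderiv ℝ φ) x u v := by
  have hgrad : gradient φ = (InnerProductSpace.toDual ℝ F).symm ∘ fderiv ℝ φ := rfl
  rw [hgrad, LinearIsometryEquiv.comp_fderiv]
  exact InnerProductSpace.toDual_symm_apply

theorem IsSymmSndFDerivAt.inner_fderiv_gradient_comm {φ : F → ℝ} {x : F}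
    (hφ : IsSymmSndFDerivAt ℝ φ x) (u v : F) :
    ⟪fderiv ℝ (gradient φ) x u, v⟫ = ⟪u, fderiv ℝ (gradient φ) x v⟫ := by
  rw [real_inner_comm _ u, inner_fderiv_gradient_apply, inner_fderiv_gradient_apply, hφ]

end Hessian

section MatVec

variable {d : ℕ}

local notation "Euc" => EuclideanSpace ℝ (Fin d)

theorem matVec_eq_toEuclideanLin (M : Matrix (Fin d) (Fin d) ℝ) (v : Euc) :
    matVec M v = Matrix.toEuclideanLin M v :=
  rfl

theorem matVec_add (M N : Matrix (Fin d) (Fin d) ℝ) (v : Euc) :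
    matVec (M + N) v = matVec M v + matVec N v := by
  simp only [matVec_eq_toEuclideanLin, map_add, LinearMap.add_apply]

theorem matVec_neg (M : Matrix (Fin d) (Fin d) ℝ) (v : Euc) :
    matVec (-M) v = -matVec M v := by
  simp only [matVec_eq_toEuclideanLin, map_neg, LinearMap.neg_apply]

theorem matVec_mul (M N : Matrix (Fin d) (Fin d) ℝ) (v : Euc) :
    matVec (M * N) v = matVec M (matVec N v) := by
  simp only [matVec, WithLp.ofLp_toLp, Matrix.mulVec_mulVec]

theorem matVec_sum_smul (c : Fin d → ℝ) (M : Fin d → Matrix (Fin d) (Fin d) ℝ) (v : Euc) :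
    matVec (∑ i, c i • M i) v = ∑ i, c i • matVec (M i) v := by
  simp only [matVec_eq_toEuclideanLin, map_sum, map_smul, LinearMap.sum_apply,
    LinearMap.smul_apply]

theorem inner_matVec_transpose_left (M : Matrix (Fin d) (Fin d) ℝ) (u w : Euc) :
    ⟪matVec Mᵀ u, w⟫ = ⟪u, matVec M w⟫ := by
  rw [← Matrix.conjTranspose_eq_transpose_of_trivial, matVec_eq_toEuclideanLin,
    Matrix.toEuclideanLin_conjTranspose_eq_adjoint, LinearMap.adjoint_inner_left]
  rfl

theorem inner_matVec_transpose_right (M : Matrix (Fin d) (Fin d) ℝ) (u w : Euc) :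
    ⟪u, matVec Mᵀ w⟫ = ⟪matVec M u, w⟫ := by
  rw [real_inner_comm, inner_matVec_transpose_left, real_inner_comm]

theorem inner_toEuc_right (u : Euc) (h : Fin d → ℝ) : ⟪u, toEuc h⟫ = ∑ i, u i * h i := by
  simp [toEuc, PiLp.inner_apply, mul_comm]

theorem matVec_hessianMatrix (φ : Euc → ℝ) (x v : Euc) :
    matVec (hessianMatrix φ x) v = fderiv ℝ (gradient φ) x v := by
  rw [matVec_eq_toEuclideanLin, hessianMatrix, LinearEquiv.apply_symm_apply]
  rfl

theorem inner_matVec_hessianMatrix_comm {φ : Euc → ℝ} (hφ : ContDiff ℝ 2 φ) (x u v : Euc) :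
    ⟪matVec (hessianMatrix φ x) u, v⟫ = ⟪u, matVec (hessianMatrix φ x) v⟫ := by
  simp only [matVec_hessianMatrix]
  exact (hφ.contDiffAt.isSymmSndFDerivAt (by simp)).inner_fderiv_gradient_comm u v

noncomputable def matVecCLM : Matrix (Fin d) (Fin d) ℝ →L[ℝ] Euc →L[ℝ] Euc :=
  LinearMap.toContinuousLinearMap
    (LinearMap.toContinuousLinearMap.toLinearMap ∘ₗ Matrix.toEuclideanLin.toLinearMap)

theorem HasDerivAt.matVec {A : ℝ → Matrix (Fin d) (Fin d) ℝ} {A' : Matrix (Fin d) (Fin d) ℝ}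
    {u : ℝ → Euc} {u' : Euc} {t : ℝ} (hA : HasDerivAt A A' t) (hu : HasDerivAt u u' t) :
    HasDerivAt (fun s => matVec (A s) (u s)) (matVec A' (u t) + matVec (A t) u') t :=
  (matVecCLM.hasFDerivAt.comp_hasDerivAt t hA).clm_apply hu

theorem ContinuousOn.matVec {A : ℝ → Matrix (Fin d) (Fin d) ℝ} {u : ℝ → Euc} {s : Set ℝ}
    (hA : ∀ i j, ContinuousOn (fun t => A t i j) s) (hu : ContinuousOn u s) :
    ContinuousOn (fun t => matVec (A t) (u t)) s := by
  have hA' : ContinuousOn A s := continuousOn_pi.2 fun i => continuousOn_pi.2 (hA i)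
  exact (matVecCLM.continuous.comp_continuousOn hA').clm_apply hu

theorem hasDerivAt_tangent_adjoint_pairing {J H : Matrix (Fin d) (Fin d) ℝ}
    {Hb : Fin d → Matrix (Fin d) (Fin d) ℝ} {p : Euc} {ξv ξw ζ a : ℝ → Euc}
    {A : ℝ → Matrix (Fin d) (Fin d) ℝ} {t : ℝ}
    (hξv : HasDerivAt ξv (matVec J (ξv t)) t) (hξw : HasDerivAt ξw (matVec J (ξw t)) t)
    (hζ : HasDerivAt ζ (matVec J (ζ t) + toEuc (fun i => ⟪ξv t, matVec (Hb i) (ξw t)⟫)) t)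
    (ha : HasDerivAt a (-matVec Jᵀ (a t) - p) t)
    (hA : HasDerivAt A (-(Jᵀ * A t + A t * J + H + ∑ i, a t i • Hb i)) t) :
    HasDerivAt (fun s => ⟪ξv s, matVec (A s) (ξw s)⟫ + ⟪a s, ζ s⟫)
      (-(⟪ξv t, matVec H (ξw t)⟫ + ⟪p, ζ t⟫)) t := by
  refine ((hξv.inner ℝ (hA.matVec hξw)).add (ha.inner ℝ hζ)).congr_deriv ?_
  simp only [matVec_neg, matVec_add, matVec_mul, matVec_sum_smul, inner_add_right,
    inner_neg_left, inner_neg_right, inner_sub_left, inner_sum, real_inner_smul_right, inner_toEuc_right, inner_matVec_transpose_left,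
    inner_matVec_transpose_right]
  ring

end MatVec

theorem second_order_hessian_bilinear_adjoint_identity_general
    (d : ℕ) (T : ℝ) (hT : 0 < T)
    (v w : EuclideanSpace ℝ (Fin d))
    (b : EuclideanSpace ℝ (Fin d) → ℝ → EuclideanSpace ℝ (Fin d))
    (f : EuclideanSpace ℝ (Fin d) → ℝ → ℝ)
    (g : EuclideanSpace ℝ (Fin d) → ℝ)
    (x : ℝ → EuclideanSpace ℝ (Fin d))
    (ξv ξw ζ a : ℝ → EuclideanSpace ℝ (Fin d))
    (A : ℝ → Matrix (Fin d) (Fin d) ℝ)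
    (hf : ∀ t : ℝ, ContDiff ℝ 2 (fun y => f y t))
    (hg : ContDiff ℝ 2 g)
    (hgfCont : ContinuousOn
      (fun t => gradient (fun y => f y t) (x t)) (Icc 0 T))
    (hHfCont : ∀ k l, ContinuousOn
      (fun t => hessianMatrix (fun y => f y t) (x t) k l) (Icc 0 T))
    -- (i) first-order tangent equations
    (hξv : ∀ t ∈ Icc (0 : ℝ) T,
      HasDerivAt ξv (matVec (jacobianMatrix (fun y => b y t) (x t)) (ξv t)) t)
    (hξv0 : ξv 0 = v)
    (hξw : ∀ t ∈ Icc (0 : ℝ) T,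
      HasDerivAt ξw (matVec (jacobianMatrix (fun y => b y t) (x t)) (ξw t)) t)
    (hξw0 : ξw 0 = w)
    -- (ii) second tangent equation
    (hζ : ∀ t ∈ Icc (0 : ℝ) T,
      HasDerivAt ζ (matVec (jacobianMatrix (fun y => b y t) (x t)) (ζ t)
        + toEuc (fun i =>
            ⟪ξv t, matVec (hessianMatrix (fun y => b y t i) (x t)) (ξw t)⟫)) t)
    (hζ0 : ζ 0 = 0)
    -- (iii) first-order adjoint equation
    (ha : ∀ t ∈ Icc (0 : ℝ) T,
      HasDerivAt a (-matVec (jacobianMatrix (fun y => b y t) (x t))ᵀ (a t)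
        - gradient (fun y => f y t) (x t)) t)
    (haT : a T = gradient g (x T))
    -- (iv) second-order adjoint matrix equation
    (hA : ∀ t ∈ Icc (0 : ℝ) T,
      HasDerivAt A (-((jacobianMatrix (fun y => b y t) (x t))ᵀ * A t
        + A t * jacobianMatrix (fun y => b y t) (x t)
        + hessianMatrix (fun y => f y t) (x t)
        + ∑ i : Fin d, a t i • hessianMatrix (fun y => b y t i) (x t))) t)
    (hAT : A T = hessianMatrix g (x T)) :
    (∫ t in (0 : ℝ)..T,
        (⟪matVec (hessianMatrix (fun y => f y t) (x t)) (ξv t), ξw t⟫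
          + ⟪gradient (fun y => f y t) (x t), ζ t⟫))
      + ⟪matVec (hessianMatrix g (x T)) (ξv T), ξw T⟫
      + ⟪gradient g (x T), ζ T⟫
      = ⟪v, matVec (A 0) w⟫ := by
  set Φ : ℝ → ℝ := fun t => ⟪ξv t, matVec (A t) (ξw t)⟫ + ⟪a t, ζ t⟫
  set F : ℝ → ℝ := fun t => ⟪matVec (hessianMatrix (fun y => f y t) (x t)) (ξv t), ξw t⟫
    + ⟪gradient (fun y => f y t) (x t), ζ t⟫
  have hΦ : ∀ t ∈ Icc 0 T, HasDerivAt Φ (-F t) t := fun t ht =>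
    (hasDerivAt_tangent_adjoint_pairing (hξv t ht) (hξw t ht) (hζ t ht) (ha t ht)
      (hA t ht)).congr_deriv (by simp only [F, inner_matVec_hessianMatrix_comm (hf t)])
  have hF : ContinuousOn F (Icc 0 T) :=
    ((ContinuousOn.matVec hHfCont (HasDerivAt.continuousOn hξv)).inner
      (HasDerivAt.continuousOn hξw)).add (hgfCont.inner (HasDerivAt.continuousOn hζ))
  have hFTC : ∫ t in (0 : ℝ)..T, F t = Φ 0 - Φ T := by
    have h := integral_eq_sub_of_hasDerivAt_of_le hT.le (HasDerivAt.continuousOn hΦ)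
      (fun t ht => hΦ t (Ioo_subset_Icc_self ht)) (hF.neg.intervalIntegrable_of_Icc hT.le)
    rw [intervalIntegral.integral_neg] at h
    linarith
  rw [hFTC, inner_matVec_hessianMatrix_comm hg]
  simp only [Φ, hξv0, hξw0, hζ0, hAT, haT, inner_zero_right, add_zero]
  ring

/-- **Pathwise second-order Hessian-bilinear adjoint identity** (deterministic/pathwise
core of the second-order adjoint lemma with purely time-dependent diffusion).

With first tangents `ξv, ξw`, second tangent `ζ`, first-order adjoint `a` and
second-order adjoint `A` along a path `x`, one has
`∫_0^T (⟪∇²ₓf ξv, ξw⟫ + ⟪∇ₓf, ζ⟫) dt + ⟪∇²g(x T) ξv(T), ξw(T)⟫ + ⟪∇g(x T), ζ(T)⟫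
  = ⟪v, A 0 · w⟫`. -/
theorem second_order_hessian_bilinear_adjoint_identity
    (d : ℕ) (hd : 0 < d) (T : ℝ) (hT : 0 < T)
    (v w : EuclideanSpace ℝ (Fin d))
    (b : EuclideanSpace ℝ (Fin d) → ℝ → EuclideanSpace ℝ (Fin d))
    (f : EuclideanSpace ℝ (Fin d) → ℝ → ℝ)
    (g : EuclideanSpace ℝ (Fin d) → ℝ)
    (x : ℝ → EuclideanSpace ℝ (Fin d))
    (ξv ξw ζ a : ℝ → EuclideanSpace ℝ (Fin d))
    (A : ℝ → Matrix (Fin d) (Fin d) ℝ)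
    (hb : ∀ t : ℝ, ContDiff ℝ 2 (fun y => b y t))
    (hf : ∀ t : ℝ, ContDiff ℝ 2 (fun y => f y t))
    (hg : ContDiff ℝ 2 g)
    (hx : ContinuousOn x (Icc 0 T))
    (hJbCont : ∀ i j, ContinuousOn
      (fun t => jacobianMatrix (fun y => b y t) (x t) i j) (Icc 0 T))
    (hHbCont : ∀ (i : Fin d) (k l : Fin d), ContinuousOn
      (fun t => hessianMatrix (fun y => b y t i) (x t) k l) (Icc 0 T))
    (hgfCont : ContinuousOn
      (fun t => gradient (fun y => f y t) (x t)) (Icc 0 T))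
    (hHfCont : ∀ k l, ContinuousOn
      (fun t => hessianMatrix (fun y => f y t) (x t) k l) (Icc 0 T))
    -- (i) first-order tangent equations
    (hξv : ∀ t ∈ Icc (0 : ℝ) T,
      HasDerivAt ξv (matVec (jacobianMatrix (fun y => b y t) (x t)) (ξv t)) t)
    (hξv0 : ξv 0 = v)
    (hξw : ∀ t ∈ Icc (0 : ℝ) T,
      HasDerivAt ξw (matVec (jacobianMatrix (fun y => b y t) (x t)) (ξw t)) t)
    (hξw0 : ξw 0 = w)
    -- (ii) second tangent equation
    (hζ : ∀ t ∈ Icc (0 : ℝ) T,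
      HasDerivAt ζ (matVec (jacobianMatrix (fun y => b y t) (x t)) (ζ t)
        + toEuc (fun i =>
            ⟪ξv t, matVec (hessianMatrix (fun y => b y t i) (x t)) (ξw t)⟫)) t)
    (hζ0 : ζ 0 = 0)
    -- (iii) first-order adjoint equation
    (ha : ∀ t ∈ Icc (0 : ℝ) T,
      HasDerivAt a (-matVec (jacobianMatrix (fun y => b y t) (x t))ᵀ (a t)
        - gradient (fun y => f y t) (x t)) t)
    (haT : a T = gradient g (x T))
    -- (iv) second-order adjoint matrix equation
    (hA : ∀ t ∈ Icc (0 : ℝ) T,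
      HasDerivAt A (-((jacobianMatrix (fun y => b y t) (x t))ᵀ * A t
        + A t * jacobianMatrix (fun y => b y t) (x t)
        + hessianMatrix (fun y => f y t) (x t)
        + ∑ i : Fin d, a t i • hessianMatrix (fun y => b y t i) (x t))) t)
    (hAT : A T = hessianMatrix g (x T)) :
    (∫ t in (0 : ℝ)..T,
        (⟪matVec (hessianMatrix (fun y => f y t) (x t)) (ξv t), ξw t⟫
          + ⟪gradient (fun y => f y t) (x t), ζ t⟫))
      + ⟪matVec (hessianMatrix g (x T)) (ξv T), ξw T⟫
      + ⟪gradient g (x T), ζ T⟫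
      = ⟪v, matVec (A 0) w⟫ :=
  second_order_hessian_bilinear_adjoint_identity_general d T hT v w b f g x ξv ξw ζ a A hf hg
    hgfCont hHfCont hξv hξv0 hξw hξw0 hζ hζ0 ha haT hA hAT
end
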